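/- Let R be a finite reduced crystallographic root system with base B, Weyl group W, length function ℓ, and let ρ be the half-sum of the positive roots. If w ∈ W has ℓ(w) = 2, then there is no root γ ∈ R with ρ − w(ρ) = 2γ. -/

import Mathlib

open scoped RealInnerProductSpace

variable {V : Type*} [NormedAddCommGroup V] [InnerProductSpace ℝ V]

/-- The reflection in the hyperplane orthogonal to `α`:
`x ↦ x - (2⟪α, x⟫/⟪α, α⟫) α`. -/
noncomputable def reflVec (α x : V) : V :=
  x - ((2 * ⟪α, x⟫) / ⟪α, α⟫) • α

/-- `v` is a linear combination of the elements of `B` with nonnegative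
coefficients. -/
def IsNonnegComb (B : Finset V) (v : V) : Prop :=
  ∃ c : V → ℝ, (∀ α, 0 ≤ c α) ∧ v = ∑ α ∈ B, c α • α

/-- A finite reduced crystallographic root system `R` in a Euclidean space `V`,
together with a base (system of simple roots) `B` and the simple reflections
`s α` (realized as linear automorphisms of `V`). -/
structure RootSystemData (V : Type*) [NormedAddCommGroup V]
    [InnerProductSpace ℝ V] where
  /-- the (finite) set of roots -/
  R : Finset V
  /-- the base (system of simple roots) -/
  B : Finset V
  /-- the reflections: `s α` is the reflection in the hyperplane orthogonal
  to `α` (see `s_apply`) -/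
  s : V → (V ≃ₗ[ℝ] V)
  zero_not_mem : (0 : V) ∉ R
  base_subset : B ⊆ R
  base_indep : LinearIndependent ℝ (fun b : {x // x ∈ B} => (b : V))
  /-- reduced: the only multiples of a root `α` that are roots are `±α` -/
  reduced : ∀ α ∈ R, ∀ c : ℝ, c • α ∈ R → c = 1 ∨ c = -1
  /-- crystallographic: `⟨β, α∨⟩ = 2⟪α, β⟫/⟪α, α⟫` is an integer -/
  crystallographic : ∀ α ∈ R, ∀ β ∈ R, ∃ n : ℤ, 2 * ⟪α, β⟫ = (n : ℝ) * ⟪α, α⟫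
  /-- `R` is stable under the reflections in its elements -/
  reflection_mem : ∀ α ∈ R, ∀ β ∈ R, reflVec α β ∈ R
  /-- `s α` is the reflection in the hyperplane orthogonal to `α` -/
  s_apply : ∀ α ∈ R, ∀ x : V, s α x = reflVec α x
  /-- every root is a nonnegative or a nonpositive combination of the base -/
  pos_or_neg : ∀ β ∈ R, IsNonnegComb B β ∨ IsNonnegComb B (-β)

/-- The positive roots: the roots which are nonnegative combinations of the
base. -/
noncomputable def posRoots (P : RootSystemData V) : Finset V :=
  @Finset.filter V (fun v => IsNonnegComb P.B v) (Classical.decPred _) P.R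

/-- The set of simple reflections. -/
def simples (P : RootSystemData V) : Set (V ≃ₗ[ℝ] V) :=
  P.s '' (P.B : Set V)

/-- The Weyl group: the subgroup of `GL(V)` generated by the simple
reflections. -/
def weylGroup (P : RootSystemData V) : Subgroup (V ≃ₗ[ℝ] V) :=
  Subgroup.closure (simples P)

/-- The length of `w` with respect to a generating set `S`: the least number of
factors in an expression of `w` as a product of elements of `S`. -/
noncomputable def lengthIn {G : Type*} [Group G] (S : Set G) (w : G) : ℕ :=
  sInf {n | ∃ l : List G, l.length = n ∧ (∀ x ∈ l, x ∈ S) ∧ l.prod = w}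

/-- The Dynkin diagram on a set `I` of simple roots: vertices are the elements
of `I`, with an edge between two distinct roots exactly when they are not
orthogonal. -/
def dynkinOn (I : Finset V) : SimpleGraph {x // x ∈ I} where
  Adj a b := a ≠ b ∧ ⟪(a : V), (b : V)⟫ ≠ 0
  symm := by
    constructor
    intro a b h
    refine ⟨h.1.symm, ?_⟩
    rw [real_inner_comm]
    exact h.2
  loopless := by
    constructor
    intro a h
    exact h.1 rfl

/-- `ρ`, the half-sum of the positive roots. -/
noncomputable def halfSumPos (P : RootSystemData V) : V :=
  (2⁻¹ : ℝ) • ∑ β ∈ posRoots P, β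

/-! Write `w = s_a s_b` with distinct simple roots `a, b`, and let `n = ⟨b, a^∨⟩`,
`n' = ⟨a, b^∨⟩`. Since `s_α ρ = ρ - α` for simple `α`, we get `ρ - wρ = (1 - n) a + b`.
If this were `2γ` for a root `γ`, the integrality of `⟨2γ, a^∨⟩` and `⟨2γ, b^∨⟩` would force
`n` and `n'` to be even; as they are `≤ 0` with `n n' < 4` (strict Cauchy–Schwarz), `a ⊥ b` and
`γ = (a + b)/2`. But then `s_a γ = (b - a)/2` would be a root with coefficients of both signs. -/

theorem reflVec_eq_sub_smul {α β : V} {t : ℝ} (hα : ⟪α, α⟫ ≠ 0)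
    (h : 2 * ⟪α, β⟫ = t * ⟪α, α⟫) : reflVec α β = β - t • α := by
  rw [reflVec, h, mul_div_cancel_right₀ _ hα]

theorem reflVec_self {α : V} (hα : α ≠ 0) : reflVec α α = -α := by
  rw [reflVec_eq_sub_smul (inner_self_ne_zero.mpr hα) rfl]
  module

theorem reflVec_reflVec {α : V} (hα : α ≠ 0) (x : V) : reflVec α (reflVec α x) = x := by
  have hαα : ⟪α, α⟫ ≠ 0 := inner_self_ne_zero.mpr hα
  rw [reflVec_eq_sub_smul (t := -(2 * ⟪α, x⟫ / ⟪α, α⟫)) hαα, reflVec]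
  · module
  · rw [reflVec, inner_sub_right, real_inner_smul_right]
    field_simp
    ring

theorem real_inner_sq_lt_of_linearIndependent {x y : V} (h : LinearIndependent ℝ ![x, y]) :
    ⟪x, y⟫ ^ 2 < ⟪x, x⟫ * ⟪y, y⟫ := by
  have hy : ‖y‖ ≠ 0 := norm_ne_zero_iff.mpr (h.ne_zero 1)
  have hlt : ∀ x' : V, LinearIndependent ℝ ![x', y] → ⟪x', y⟫ < ‖x'‖ * ‖y‖ :=
    fun x' h' ↦ inner_lt_norm_mul_iff_real.mpr fun e ↦
      hy (LinearIndependent.pair_iff.mp h' _ _ (by rw [e, neg_smul, add_neg_cancel])).1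
  have h₁ := hlt x h
  have h₂ := hlt (-x) (LinearIndependent.pair_neg_left_iff.mpr h)
  rw [inner_neg_left, norm_neg] at h₂
  rw [real_inner_self_eq_norm_sq, real_inner_self_eq_norm_sq, ← mul_pow]
  exact sq_lt_sq' (by linarith) h₁

theorem mul_lt_four_of_linearIndependent {x y : V} {t t' : ℝ}
    (h : LinearIndependent ℝ ![x, y]) (ht : 2 * ⟪x, y⟫ = t * ⟪x, x⟫)
    (ht' : 2 * ⟪y, x⟫ = t' * ⟪y, y⟫) : t * t' < 4 := by
  have hx : 0 < ⟪x, x⟫ := real_inner_self_pos.mpr (h.ne_zero 0)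
  have hy : 0 < ⟪y, y⟫ := real_inner_self_pos.mpr (h.ne_zero 1)
  have hcs := real_inner_sq_lt_of_linearIndependent h
  rw [real_inner_comm] at ht'
  have : t * t' * (⟪x, x⟫ * ⟪y, y⟫) = 4 * ⟪x, y⟫ ^ 2 := by
    linear_combination (-(t' * ⟪y, y⟫)) * ht - 2 * ⟪x, y⟫ * ht'
  nlinarith [mul_pos hx hy]

theorem sum_pi_single_smul [DecidableEq V] {B : Finset V} {α : V} (hα : α ∈ B) (a : ℝ) :
    ∑ x ∈ B, (Pi.single α a : V → ℝ) x • x = a • α := by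
  simp [Pi.single_apply, hα]

theorem isNonnegComb_sum_smul {B : Finset V} {f : V → ℝ} (hf : ∀ x ∈ B, 0 ≤ f x) :
    IsNonnegComb B (∑ x ∈ B, f x • x) :=
  ⟨fun x ↦ max (f x) 0, fun _ ↦ le_max_right _ _,
    Finset.sum_congr rfl fun x hx ↦ by simp only [max_eq_left (hf x hx)]⟩

theorem lengthIn_one {G : Type*} [Group G] (S : Set G) : lengthIn S 1 = 0 :=
  Nat.sInf_eq_zero.mpr (Or.inl ⟨[], rfl, by simp, rfl⟩)

theorem exists_mul_eq_of_lengthIn_eq_two {G : Type*} [Group G] {S : Set G} {w : G}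
    (h : lengthIn S w = 2) : ∃ x ∈ S, ∃ y ∈ S, x * y = w := by
  have hpos : 0 < lengthIn S w := by omega
  obtain ⟨l, hl, hlS, rfl⟩ :
      2 ∈ {n | ∃ l : List G, l.length = n ∧ (∀ x ∈ l, x ∈ S) ∧ l.prod = w} :=
    h ▸ Nat.sInf_mem (Nat.nonempty_of_pos_sInf hpos)
  obtain ⟨x, y, rfl⟩ := List.length_eq_two.mp hl
  exact ⟨x, hlS x (by simp), y, hlS y (by simp), by simp⟩

theorem Int.mul_eq_zero_of_even_of_nonpos_of_mul_lt_four {n n' : ℤ} (hn : Even n)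
    (hn' : Even n') (hn0 : n ≤ 0) (hn'0 : n' ≤ 0) (hlt : n * n' < 4) : n * n' = 0 := by
  obtain ⟨k, rfl⟩ := hn
  obtain ⟨k', rfl⟩ := hn'
  have hkk' : 0 ≤ k * k' := mul_nonneg_of_nonpos_of_nonpos (by omega) (by omega)
  have : k * k' = 0 := by nlinarith
  linear_combination 4 * this

namespace RootSystemData

variable {P : RootSystemData V}

theorem ne_zero_of_mem {α : V} (hα : α ∈ P.R) : α ≠ 0 :=
  fun h ↦ P.zero_not_mem (h ▸ hα)

theorem inner_self_pos_of_mem {α : V} (hα : α ∈ P.R) : 0 < ⟪α, α⟫ :=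
  real_inner_self_pos.mpr (ne_zero_of_mem hα)

theorem linearIndepOn_base (P : RootSystemData V) : LinearIndepOn ℝ id (P.B : Set V) :=
  P.base_indep

theorem coeff_eq_of_sum_smul_eq {f g : V → ℝ}
    (h : ∑ x ∈ P.B, f x • x = ∑ x ∈ P.B, g x • x) : ∀ x ∈ P.B, f x = g x := by
  have h₀ : ∑ x ∈ P.B, (f - g) x • id x = 0 := by
    simp [sub_smul, Finset.sum_sub_distrib, h]
  exact fun x hx ↦ sub_eq_zero.mp (linearIndepOn_finset_iff.mp P.linearIndepOn_base _ h₀ x hx)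

theorem linearIndependent_pair {α β : V} (hα : α ∈ P.B) (hβ : β ∈ P.B) (hne : α ≠ β) :
    LinearIndependent ℝ ![α, β] := by
  rw [LinearIndependent.pair_iff]
  exact (LinearIndepOn.pair_iff id hne).mp
    (P.linearIndepOn_base.mono (by simp [Set.insert_subset_iff, hα, hβ]))

theorem nonneg_or_nonpos_of_sum_smul_mem {f : V → ℝ} (h : ∑ x ∈ P.B, f x • x ∈ P.R) :
    (∀ x ∈ P.B, 0 ≤ f x) ∨ ∀ x ∈ P.B, f x ≤ 0 := by
  rcases P.pos_or_neg _ h with ⟨c, hc, hfc⟩ | ⟨c, hc, hfc⟩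
  · exact .inl fun x hx ↦ coeff_eq_of_sum_smul_eq hfc x hx ▸ hc x
  · refine .inr fun x hx ↦ ?_
    have hfc' : ∑ x ∈ P.B, f x • x = ∑ x ∈ P.B, (-c) x • x := by
      simp [neg_smul, Finset.sum_neg_distrib, ← hfc]
    simpa [coeff_eq_of_sum_smul_eq hfc' x hx] using hc x

theorem smul_add_smul_notMem {α β : V} (hα : α ∈ P.B) (hβ : β ∈ P.B) (hne : α ≠ β)
    {a b : ℝ} (ha : a < 0) (hb : 0 < b) : a • α + b • β ∉ P.R := by
  classical
  set f : V → ℝ := Pi.single α a + Pi.single β b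
  have hf : ∑ x ∈ P.B, f x • x = a • α + b • β := by
    simp only [f, Pi.add_apply, add_smul, Finset.sum_add_distrib, sum_pi_single_smul hα,
      sum_pi_single_smul hβ]
  have hfα : f α = a := by simp [f, hne]
  have hfβ : f β = b := by simp [f, hne]
  intro hmem
  rcases nonneg_or_nonpos_of_sum_smul_mem (hf ▸ hmem) with h | h
  · linarith [hfα ▸ h α hα]
  · linarith [hfβ ▸ h β hβ]

theorem pairing_nonpos {α β : V} (hα : α ∈ P.B) (hβ : β ∈ P.B) (hne : α ≠ β) {n : ℤ}
    (hn : 2 * ⟪α, β⟫ = n * ⟪α, α⟫) : n ≤ 0 := by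
  by_contra! hpos
  have hrefl : reflVec α β = (-(n : ℝ)) • α + (1 : ℝ) • β := by
    rw [reflVec_eq_sub_smul (inner_self_pos_of_mem (P.base_subset hα)).ne' hn]
    module
  exact smul_add_smul_notMem hα hβ hne (by simpa using hpos) one_pos
    (hrefl ▸ P.reflection_mem α (P.base_subset hα) β (P.base_subset hβ))

theorem mem_posRoots {β : V} : β ∈ posRoots P ↔ β ∈ P.R ∧ IsNonnegComb P.B β := by
  classical
  simp [posRoots]

theorem mem_posRoots_of_mem_base {α : V} (hα : α ∈ P.B) : α ∈ posRoots P := by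
  classical
  refine mem_posRoots.mpr ⟨P.base_subset hα, ?_⟩
  simpa [sum_pi_single_smul hα] using
    isNonnegComb_sum_smul (B := P.B) (f := Pi.single α 1) fun x _ ↦ by
      by_cases h : x = α <;> simp [h]

theorem exists_ne_coeff_pos {α β : V} (hα : α ∈ P.B) (hβ : β ∈ P.R) (hne : β ≠ α)
    {c : V → ℝ} (hc : ∀ x, 0 ≤ c x) (hβc : β = ∑ x ∈ P.B, c x • x) :
    ∃ j ∈ P.B, j ≠ α ∧ 0 < c j := by
  classical
  by_contra! h
  have hβα : β = c α • α := by
    rw [hβc, ← sum_pi_single_smul hα]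
    refine Finset.sum_congr rfl fun x hx ↦ ?_
    by_cases hxα : x = α
    · simp [hxα]
    · simp [hxα, le_antisymm (h x hx hxα) (hc x)]
  rcases P.reduced α (P.base_subset hα) (c α) (hβα ▸ hβ) with h1 | h1
  · exact hne (by rw [hβα, h1, one_smul])
  · linarith [hc α]

theorem reflVec_mem_posRoots_erase [DecidableEq V] {α β : V} (hα : α ∈ P.B)
    (hβ : β ∈ (posRoots P).erase α) : reflVec α β ∈ (posRoots P).erase α := by
  obtain ⟨hne, hβR, c, hc, hβc⟩ :=
    Finset.mem_erase.trans (and_congr_right' mem_posRoots) |>.mp hβ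
  obtain ⟨j, hj, hjα, hcj⟩ := exists_ne_coeff_pos hα hβR hne hc hβc
  set g : V → ℝ := c - Pi.single α (2 * ⟪α, β⟫ / ⟪α, α⟫)
  have hg : reflVec α β = ∑ x ∈ P.B, g x • x := by
    simp only [g, Pi.sub_apply, sub_smul, Finset.sum_sub_distrib, sum_pi_single_smul hα,
      ← hβc]
    rfl
  have hgj : g j = c j := by simp [g, hjα]
  have hR : reflVec α β ∈ P.R := P.reflection_mem α (P.base_subset hα) β hβR
  refine Finset.mem_erase.mpr ⟨fun h ↦ ?_, mem_posRoots.mpr ⟨hR, ?_⟩⟩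
  · -- `α` has coefficient `0` at `j`, but `reflVec α β` has coefficient `c j > 0`
    have hαsum : α = ∑ x ∈ P.B, (Pi.single α 1 : V → ℝ) x • x := by
      rw [sum_pi_single_smul hα, one_smul]
    have := coeff_eq_of_sum_smul_eq (hg.symm.trans (h.trans hαsum)) j hj
    simp only [hgj, Pi.single_apply, hjα, if_false] at this
    linarith
  · rcases nonneg_or_nonpos_of_sum_smul_mem (hg ▸ hR) with h | h
    · exact hg ▸ isNonnegComb_sum_smul h
    · linarith [hgj ▸ h j hj]

theorem sum_posRoots_reflVec {α : V} (hα : α ∈ P.B) :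
    ∑ β ∈ posRoots P, reflVec α β = ∑ β ∈ posRoots P, β - (2 : ℝ) • α := by
  classical
  have hα0 : α ≠ 0 := ne_zero_of_mem (P.base_subset hα)
  have herase : ∑ β ∈ (posRoots P).erase α, reflVec α β = ∑ β ∈ (posRoots P).erase α, β :=
    Finset.sum_nbij' (reflVec α) (reflVec α) (fun _ ↦ reflVec_mem_posRoots_erase hα)
      (fun _ ↦ reflVec_mem_posRoots_erase hα) (fun β _ ↦ reflVec_reflVec hα0 β)
      (fun β _ ↦ reflVec_reflVec hα0 β) fun _ _ ↦ rfl
  have hαpos := mem_posRoots_of_mem_base hα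
  rw [← Finset.add_sum_erase _ _ hαpos, ← Finset.add_sum_erase _ (fun β ↦ β) hαpos, herase,
    reflVec_self hα0]
  module

theorem s_halfSumPos {α : V} (hα : α ∈ P.B) : P.s α (halfSumPos P) = halfSumPos P - α := by
  rw [halfSumPos, map_smul, map_sum,
    Finset.sum_congr rfl fun β _ ↦ P.s_apply α (P.base_subset hα) β, sum_posRoots_reflVec hα]
  module

theorem s_mul_self {α : V} (hα : α ∈ P.R) : P.s α * P.s α = 1 :=
  LinearEquiv.ext fun x ↦ by
    rw [LinearEquiv.mul_apply, P.s_apply α hα, P.s_apply α hα,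
      reflVec_reflVec (ne_zero_of_mem hα)]
    rfl

theorem halfSumPos_sub_s_mul_s {a b : V} (ha : a ∈ P.B) (hb : b ∈ P.B) {n : ℤ}
    (hn : 2 * ⟪a, b⟫ = n * ⟪a, a⟫) :
    halfSumPos P - (P.s a * P.s b) (halfSumPos P) = (1 - (n : ℝ)) • a + b := by
  rw [LinearEquiv.mul_apply, s_halfSumPos hb, map_sub, s_halfSumPos ha,
    P.s_apply a (P.base_subset ha),
    reflVec_eq_sub_smul (inner_self_pos_of_mem (P.base_subset ha)).ne' hn]
  module

theorem inner_eq_zero_of_one_sub_smul_add_eq_two_smul {a b γ : V} (ha : a ∈ P.B)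
    (hb : b ∈ P.B) (hab : a ≠ b) (hγ : γ ∈ P.R) {n : ℤ} (hn : 2 * ⟪a, b⟫ = n * ⟪a, a⟫)
    (h : (1 - (n : ℝ)) • a + b = (2 : ℝ) • γ) : ⟪a, b⟫ = 0 := by
  have haR := P.base_subset ha
  have hbR := P.base_subset hb
  have haa := inner_self_pos_of_mem haR
  have hbb := inner_self_pos_of_mem hbR
  obtain ⟨n', hn'⟩ := P.crystallographic b hbR a haR
  obtain ⟨m, hm⟩ := P.crystallographic a haR γ hγ
  obtain ⟨m', hm'⟩ := P.crystallographic b hbR γ hγ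
  have hpa : ⟪a, (1 - (n : ℝ)) • a + b⟫ = ⟪a, (2 : ℝ) • γ⟫ := by rw [h]
  have hpb : ⟪b, (1 - (n : ℝ)) • a + b⟫ = ⟪b, (2 : ℝ) • γ⟫ := by rw [h]
  simp only [inner_add_right, real_inner_smul_right] at hpa hpb
  have hnm : n = 2 - 2 * m := by
    have : (n : ℝ) * ⟪a, a⟫ = (2 - 2 * m) * ⟪a, a⟫ := by
      linear_combination -2 * hpa + hn - 2 * hm
    exact_mod_cast mul_right_cancel₀ haa.ne' this
  have hn'm' : (1 - n) * n' + 2 = 2 * m' := by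
    have : ((1 - n) * n' + 2 : ℝ) * ⟪b, b⟫ = 2 * m' * ⟪b, b⟫ := by
      linear_combination 2 * hpb - (1 - (n : ℝ)) * hn' + 2 * hm'
    exact_mod_cast mul_right_cancel₀ hbb.ne' this
  have hn_even : Even n := ⟨1 - m, by omega⟩
  have hn'_even : Even n' := (Int.even_mul.mp ⟨m' - 1, by linarith⟩).resolve_left
    (Int.not_even_iff_odd.mpr (odd_one.sub_even hn_even))
  have hlt : (n : ℝ) * n' < 4 :=
    mul_lt_four_of_linearIndependent (linearIndependent_pair ha hb hab) hn hn'
  have hnn' : n * n' = 0 :=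
    Int.mul_eq_zero_of_even_of_nonpos_of_mul_lt_four hn_even hn'_even
      (pairing_nonpos ha hb hab hn) (pairing_nonpos hb ha hab.symm hn') (by exact_mod_cast hlt)
  rw [real_inner_comm] at hn'
  have : 4 * ⟪a, b⟫ ^ 2 = ((n * n' : ℤ) : ℝ) * (⟪a, a⟫ * ⟪b, b⟫) := by
    push_cast; linear_combination 2 * ⟪a, b⟫ * hn + n * ⟪a, a⟫ * hn'
  rw [hnn', Int.cast_zero, zero_mul] at this
  exact pow_eq_zero_iff (n := 2) two_ne_zero |>.mp (by linarith)

theorem one_sub_smul_add_ne_two_smul {a b γ : V} (ha : a ∈ P.B) (hb : b ∈ P.B) (hab : a ≠ b)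
    (hγ : γ ∈ P.R) {n : ℤ} (hn : 2 * ⟪a, b⟫ = n * ⟪a, a⟫) :
    (1 - (n : ℝ)) • a + b ≠ (2 : ℝ) • γ := by
  intro h
  have hab0 := inner_eq_zero_of_one_sub_smul_add_eq_two_smul ha hb hab hγ hn h
  have haa := inner_self_pos_of_mem (P.base_subset ha)
  have hn0 : (n : ℝ) = 0 := by nlinarith
  rw [hn0, sub_zero, one_smul] at h
  have hγa : 2 * ⟪a, γ⟫ = 1 * ⟪a, a⟫ := by
    have : ⟪a, a + b⟫ = ⟪a, (2 : ℝ) • γ⟫ := by rw [h]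
    rw [inner_add_right, real_inner_smul_right, hab0] at this
    linarith
  have hrefl : reflVec a γ = (-2⁻¹ : ℝ) • a + (2⁻¹ : ℝ) • b := by
    rw [reflVec_eq_sub_smul haa.ne' hγa]
    linear_combination (norm := module) (-2⁻¹ : ℝ) • h
  exact smul_add_smul_notMem ha hb hab (by norm_num) (by norm_num)
    (hrefl ▸ P.reflection_mem a (P.base_subset ha) γ hγ)

end RootSystemData

theorem rho_sub_w_rho_ne_two_smul_root_general {V : Type*} [NormedAddCommGroup V]
    [InnerProductSpace ℝ V] (P : RootSystemData V)
    (w : V ≃ₗ[ℝ] V) (hlen : lengthIn (simples P) w = 2) :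
    ¬ ∃ γ ∈ P.R, halfSumPos P - w (halfSumPos P) = (2 : ℝ) • γ := by
  rintro ⟨γ, hγ, h⟩
  obtain ⟨_, ⟨a, ha, rfl⟩, _, ⟨b, hb, rfl⟩, rfl⟩ := exists_mul_eq_of_lengthIn_eq_two hlen
  have hab : a ≠ b := by
    rintro rfl
    rw [RootSystemData.s_mul_self (P.base_subset ha), lengthIn_one] at hlen
    exact two_ne_zero hlen.symm
  obtain ⟨n, hn⟩ := P.crystallographic a (P.base_subset ha) b (P.base_subset hb)
  rw [RootSystemData.halfSumPos_sub_s_mul_s ha hb hn] at h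
  exact RootSystemData.one_sub_smul_add_ne_two_smul ha hb hab hγ hn h

/-- Let `R` be a finite reduced crystallographic root system with
base `B`, Weyl group `W`, length function `ℓ`, and `ρ` the half-sum of the
positive roots. If `w ∈ W` has `ℓ(w) = 2`, then there is no root `γ ∈ R` with
`ρ - w(ρ) = 2γ`. -/
theorem rho_sub_w_rho_ne_two_smul_root {V : Type*} [NormedAddCommGroup V]
    [InnerProductSpace ℝ V] (P : RootSystemData V)
    (w : V ≃ₗ[ℝ] V) (hw : w ∈ weylGroup P)
    (hlen : lengthIn (simples P) w = 2) :
    ¬ ∃ γ ∈ P.R, halfSumPos P - w (halfSumPos P) = (2 : ℝ) • γ :=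
  rho_sub_w_rho_ne_two_smul_root_general P w hlen
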